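/- Let Γ be a countable group acting Borel amenably on a Borel space X. Then for every x ∈ X, the stabilizer Stab_Γ(x) is an amenable group. -/

import Mathlib

noncomputable section
open Filter Topology

/-- A probability measure on a countable set, seen as a nonnegative ℓ¹-function summing to 1. -/
def IsProbFn {K : Type*} (μ : K → ℝ) : Prop := (∀ k, 0 ≤ μ k) ∧ HasSum μ 1

/-- ℓ¹-distance between two measures on a countable set. -/
def l1dist {K : Type*} (μ ν : K → ℝ) : ℝ := ∑' k, |μ k - ν k|

/-- Pushforward of a measure under the action of a group element. -/
def pushAct {Γ K : Type*} [Group Γ] [MulAction Γ K] (γ : Γ) (μ : K → ℝ) : K → ℝ :=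
  fun k => μ (γ⁻¹ • k)

/-- Borel amenability of an action of a countable group on a Borel space:
Borel maps `μₙ : X → Prob(Γ)` with `‖μₙ(γ·x) − γ·μₙ(x)‖₁ → 0` for all `γ` and `x`. -/
def BorelAmenableAction (Γ X : Type*) [Group Γ] [MeasurableSpace X] [MulAction Γ X] : Prop :=
  ∃ μ : ℕ → X → Γ → ℝ,
    (∀ n x, IsProbFn (μ n x)) ∧
    (∀ n γ, Measurable fun x => μ n x γ) ∧
    ∀ γ : Γ, ∀ x : X, Tendsto (fun n => l1dist (μ n (γ • x)) (pushAct γ (μ n x))) atTop (𝓝 0)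

/-- Amenability of a countable group via a Reiter sequence. -/
def ReiterAmenable (Γ : Type*) [Group Γ] : Prop :=
  ∃ ν : ℕ → Γ → ℝ, (∀ n, IsProbFn (ν n)) ∧
    ∀ γ : Γ, Tendsto (fun n => l1dist (pushAct γ (ν n)) (ν n)) atTop (𝓝 0)

/-!
For `h` in the stabilizer `H` of `x`, the Borel amenability condition at `(h, x)` reads
`‖μₙ(x) − h·μₙ(x)‖₁ → 0`: the measures `μₙ(x)` on `Γ` are asymptotically `H`-invariant.
Since `H` acts freely on `Γ`, there is an `H`-equivariant map `r : Γ → H`. Pushing `μₙ(x)`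
forward along `r` gives probability measures on `H`; pushforward commutes with the action and
does not increase `ℓ¹`-distances, so these form a Reiter sequence for `H`.
-/

/-- Pushforward along `r` of a measure on a countable set. -/
def fiberSum {K L : Type*} (r : K → L) (μ : K → ℝ) : L → ℝ :=
  fun l => ∑' k : r ⁻¹' {l}, μ k

section FiberSum

variable {K L : Type*} (r : K → L)

lemma IsProbFn.fiberSum {μ : K → ℝ} (hμ : IsProbFn μ) : IsProbFn (fiberSum r μ) :=
  ⟨fun _ => tsum_nonneg fun _ => hμ.1 _, hμ.2.tsum_fiberwise r⟩

lemma fiberSum_sub {μ ν : K → ℝ} (hμ : Summable μ) (hν : Summable ν) :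
    fiberSum r (fun k => μ k - ν k) = fiberSum r μ - fiberSum r ν :=
  funext fun _ => (hμ.subtype _).tsum_sub (hν.subtype _)

lemma abs_fiberSum_le {f : K → ℝ} (hf : Summable f) (l : L) :
    |fiberSum r f l| ≤ fiberSum r (fun k => |f k|) l :=
  norm_tsum_le_tsum_norm (f := fun k : r ⁻¹' {l} => f k) (hf.norm.subtype _)

lemma tsum_abs_fiberSum_le {f : K → ℝ} (hf : Summable f) :
    ∑' l, |fiberSum r f l| ≤ ∑' k, |f k| := by
  have hfib := hf.abs.hasSum.tsum_fiberwise r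
  exact (Summable.tsum_le_tsum (abs_fiberSum_le r hf)
    (hfib.summable.of_nonneg_of_le (fun _ => abs_nonneg _) (abs_fiberSum_le r hf))
    hfib.summable).trans_eq hfib.tsum_eq

lemma l1dist_fiberSum_le {μ ν : K → ℝ} (hμ : Summable μ) (hν : Summable ν) :
    l1dist (fiberSum r μ) (fiberSum r ν) ≤ l1dist μ ν := by
  have := tsum_abs_fiberSum_le r (hμ.sub hν)
  rwa [fiberSum_sub r hμ hν] at this

lemma pushAct_fiberSum {G : Type*} [Group G] [MulAction G K] [MulAction G L]
    (hr : ∀ (g : G) (k : K), r (g • k) = g • r k) (g : G) (μ : K → ℝ) :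
    pushAct g (fiberSum r μ) = fiberSum r (pushAct g μ) := by
  funext l
  let e : r ⁻¹' {l} ≃ r ⁻¹' {g⁻¹ • l} :=
    (MulAction.toPerm g⁻¹).subtypeEquiv fun k => by
      simp only [Set.mem_preimage, Set.mem_singleton_iff, MulAction.toPerm_apply, hr,
        smul_left_cancel_iff]
  exact (e.tsum_eq (fun k => μ k)).symm

end FiberSum

lemma l1dist_comm {K : Type*} (μ ν : K → ℝ) : l1dist μ ν = l1dist ν μ :=
  tsum_congr fun _ => abs_sub_comm _ _

/-- Write each point as `g • p` with `p` the chosen representative of its orbit; freeness makes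
`g` unique. -/
lemma MulAction.exists_equivariant_map_of_free {G K : Type*} [Group G] [MulAction G K]
    (hfree : ∀ (g : G) (k : K), g • k = k → g = 1) :
    ∃ r : K → G, ∀ (g : G) (k : K), r (g • k) = g * r k := by
  let rep : K → K := fun k => (Quotient.mk (MulAction.orbitRel G K) k).out
  have hrep : ∀ k, ∃ g : G, g • rep k = k := fun k =>
    (MulAction.orbitRel G K).symm' (Quotient.mk_out k)
  have hrep_smul : ∀ (g : G) k, rep (g • k) = rep k := fun g k =>
    congrArg Quotient.out (Quotient.sound ⟨g, rfl⟩)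
  have hcancel : ∀ (a b : G) (k : K), a • k = b • k → a = b := fun a b k hab =>
    inv_mul_eq_one.1 (hfree _ k (by rw [mul_smul, ← hab, inv_smul_smul]))
  choose r hr using hrep
  refine ⟨r, fun g k => hcancel _ _ (rep k) ?_⟩
  rw [mul_smul, hr, ← hrep_smul g, hr]

lemma ReiterAmenable.of_free_action {H K : Type*} [Group H] [MulAction H K]
    (hfree : ∀ (h : H) (k : K), h • k = k → h = 1) (μ : ℕ → K → ℝ) (hμ : ∀ n, IsProbFn (μ n))
    (hinv : ∀ h : H, Tendsto (fun n => l1dist (pushAct h (μ n)) (μ n)) atTop (𝓝 0)) :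
    ReiterAmenable H := by
  obtain ⟨r, hr⟩ := MulAction.exists_equivariant_map_of_free hfree
  refine ⟨fun n => fiberSum r (μ n), fun n => (hμ n).fiberSum r, fun h => ?_⟩
  refine squeeze_zero (fun _ => tsum_nonneg fun _ => abs_nonneg _) (fun n => ?_) (hinv h)
  have hsum : Summable (μ n) := (hμ n).2.summable
  rw [pushAct_fiberSum r hr]
  exact l1dist_fiberSum_le r ((Equiv.summable_iff (MulAction.toPerm h⁻¹)).2 hsum) hsum

theorem stabilizer_of_borel_amenable_action_amenable_general
    {Γ X : Type*} [Group Γ] [MeasurableSpace X] [MulAction Γ X]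
    (h : BorelAmenableAction Γ X) :
    ∀ x : X, ReiterAmenable ↥(MulAction.stabilizer Γ x) := by
  obtain ⟨μ, hprob, -, hconv⟩ := h
  intro x
  refine ReiterAmenable.of_free_action (K := Γ) (fun h g hg => Subtype.ext (mul_eq_right.1 hg))
    (fun n => μ n x) (fun n => hprob n x) fun h => ?_
  have := hconv h x
  rw [h.2] at this
  exact this.congr fun _ => l1dist_comm _ _

/-- for a Borel amenable action of a countable group `Γ` on a Borel space `X`,
the stabilizer of every point is an amenable group. -/
theorem stabilizer_of_borel_amenable_action_amenable
    {Γ X : Type*} [Group Γ] [Countable Γ] [MeasurableSpace X] [MulAction Γ X]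
    (h : BorelAmenableAction Γ X) :
    ∀ x : X, ReiterAmenable ↥(MulAction.stabilizer Γ x) :=
  stabilizer_of_borel_amenable_action_amenable_general h
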